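/- Let i > 0 and let w, w′ ∈ W_i. Let α = lca(leaf_{i−1}(w), leaf_{i−1}(w′)) in T̄_{i−1} and let β = link(lca(leaf_i(w), leaf_i(w′))). Then β is an ancestor of α and |RLE(val(β, α))| ≤ 1. -/

import Mathlib

namespace DynStr

/-- The set `𝒮` of symbols over the alphabet `α`:
base letters, pairing symbols `(S₁,S₂)` and power symbols `(S,k)`. -/
inductive Sym (α : Type) : Type where
  | base : α → Sym α
  | pair : Sym α → Sym α → Sym α
  | pow  : Sym α → ℕ → Sym α
deriving DecidableEq

variable {α : Type} [DecidableEq α]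

/-- The string over `Σ` generated by a symbol. -/
def strSym : Sym α → List α
  | .base a => [a]
  | .pair s t => strSym s ++ strSym t
  | .pow s k => (List.replicate k (strSym s)).flatten

/-- Run-length pairs: the maximal blocks of equal elements, with multiplicities. -/
def runs {β : Type} [DecidableEq β] : List β → List (β × ℕ)
  | [] => []
  | a :: l =>
    match runs l with
    | [] => [(a, 1)]
    | (b, k) :: rest => if a = b then (b, k + 1) :: rest else (a, 1) :: (b, k) :: rest

/-- `|RLE(w)|`: the number of blocks in the run-length encoding of `w`. -/
def rleLen {β : Type} [DecidableEq β] (w : List β) : ℕ := (runs w).length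

/-- The `Rle` function: replace every maximal block `S^k` with `k ≥ 2` by `(S,k)`. -/
def rle : List (Sym α) → List (Sym α) :=
  fun w => (runs w).map fun p => if 2 ≤ p.2 then Sym.pow p.1 p.2 else p.1

/-- `Compressᵢ` with bit function `g`: replace every (disjoint, greedily-from-the-left
determined, i.e. uniquely determined) adjacent pair `S S'` with `g S = 0`, `g S' = 1`
by the symbol `(S,S')`. -/
def compress (g : Sym α → Bool) : List (Sym α) → List (Sym α)
  | [] => []
  | [a] => [a]
  | a :: b :: l =>
    if g a = false ∧ g b = true then Sym.pair a b :: compress g l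
    else a :: compress g (b :: l)

/-- `shrinkᵢ` (for `i ≥ 1`): `Rle` for odd `i`, `Compress_{i/2}` for even `i`. -/
def shrinkStep (h : ℕ → Sym α → Bool) (i : ℕ) (w : List (Sym α)) : List (Sym α) :=
  if i % 2 = 1 then rle w else compress (h (i / 2)) w

/-- `shrink^i`, the iterated parsing function. -/
def shrinkIter (h : ℕ → Sym α → Bool) : ℕ → List (Sym α) → List (Sym α)
  | 0, w => w
  | i + 1, w => shrinkStep h (i + 1) (shrinkIter h i w)

/-- `Depth(w)`: the least `i` with `|shrink^i(w)| = 1`. -/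
noncomputable def depth (h : ℕ → Sym α → Bool) (w : List (Sym α)) : ℕ :=
  sInf {i | (shrinkIter h i w).length = 1}

/-- A string over `Σ` viewed as a string of (base) symbols. -/
def embed (w : List α) : List (Sym α) := w.map Sym.base

/-- Sizes of the blocks formed by `Compress` with bit function `g`. -/
def compBlocks (g : Sym α → Bool) : List (Sym α) → List ℕ
  | [] => []
  | [_] => [1]
  | a :: b :: l =>
    if g a = false ∧ g b = true then 2 :: compBlocks g l
    else 1 :: compBlocks g (b :: l)

/-- Sizes of the blocks formed by `shrinkᵢ`. -/
def stepBlocks (h : ℕ → Sym α → Bool) (i : ℕ) (w : List (Sym α)) : List ℕ :=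
  if i % 2 = 1 then (runs w).map Prod.snd else compBlocks (h (i / 2)) w

/-- Sizes of the blocks formed when passing from level `l` to level `l+1` of the
uncompressed parse tree of `w`. -/
def blocksAt (h : ℕ → Sym α → Bool) (w : List (Sym α)) (l : ℕ) : List ℕ :=
  stepBlocks h (l + 1) (shrinkIter h l w)

/-- Index of the block (in a list of block sizes) containing position `j`. -/
def blockOf : List ℕ → ℕ → ℕ
  | [], _ => 0
  | b :: bs, j => if j < b then 0 else blockOf bs (j - b) + 1

/-- A node of the uncompressed parse tree `T̄(w)`: the `idx`-th symbol occurrence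
(0-indexed) of `shrink^level(w)`. -/
structure TNode where
  level : ℕ
  idx : ℕ
deriving DecidableEq

/-- `v` is an actual node of `T̄(w)`. -/
def IsNode (h : ℕ → Sym α → Bool) (w : List (Sym α)) (v : TNode) : Prop :=
  v.level ≤ depth h w ∧ v.idx < (shrinkIter h v.level w).length

/-- The signature (symbol) of a node. -/
def sigAt (h : ℕ → Sym α → Bool) (w : List (Sym α)) (v : TNode) : Option (Sym α) :=
  (shrinkIter h v.level w)[v.idx]?

/-- Index in `w` (i.e. on level 0) of the first position below the `j`-th symbol of
`shrink^l(w)`. -/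
def startIdx (h : ℕ → Sym α → Bool) (w : List (Sym α)) : ℕ → ℕ → ℕ
  | 0, j => j
  | l + 1, j => startIdx h w l (((blocksAt h w l).take j).sum)

/-- The first level-0 position of the fragment represented by `v`. -/
def begIdx (h : ℕ → Sym α → Bool) (w : List (Sym α)) (v : TNode) : ℕ :=
  startIdx h w v.level v.idx

/-- One past the last level-0 position of the fragment represented by `v`. -/
def endIdx (h : ℕ → Sym α → Bool) (w : List (Sym α)) (v : TNode) : ℕ :=
  startIdx h w v.level (v.idx + 1)

/-- `par(v)`. -/
def parNode (h : ℕ → Sym α → Bool) (w : List (Sym α)) (v : TNode) : TNode :=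
  ⟨v.level + 1, blockOf (blocksAt h w v.level) v.idx⟩

/-- The parent of `v` exists in `T̄(w)`. -/
def HasPar (h : ℕ → Sym α → Bool) (w : List (Sym α)) (v : TNode) : Prop :=
  IsNode h w v ∧ v.level < depth h w

/-- The number of children of `v` (for `v.level ≥ 1`). -/
def degree (h : ℕ → Sym α → Bool) (w : List (Sym α)) (v : TNode) : ℕ :=
  (blocksAt h w (v.level - 1)).getD v.idx 0

/-- `child(v,k)`, the `k`-th child of `v` (`k` is 1-indexed). -/
def childNode (h : ℕ → Sym α → Bool) (w : List (Sym α)) (v : TNode) (k : ℕ) : TNode :=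
  ⟨v.level - 1, ((blocksAt h w (v.level - 1)).take v.idx).sum + (k - 1)⟩

/-- The `k`-th child of `v` exists in `T̄(w)`. -/
def HasChild (h : ℕ → Sym α → Bool) (w : List (Sym α)) (v : TNode) (k : ℕ) : Prop :=
  IsNode h w v ∧ 1 ≤ v.level ∧ 1 ≤ k ∧ k ≤ degree h w v

/-- `left(v)`. -/
def leftNode (v : TNode) : TNode := ⟨v.level, v.idx - 1⟩

/-- `right(v)`. -/
def rightNode (v : TNode) : TNode := ⟨v.level, v.idx + 1⟩

/-- `left(v)` exists in `T̄(w)`. -/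
def HasLeft (h : ℕ → Sym α → Bool) (w : List (Sym α)) (v : TNode) : Prop :=
  IsNode h w v ∧ 1 ≤ v.idx

/-- `right(v)` exists in `T̄(w)`. -/
def HasRight (h : ℕ → Sym α → Bool) (w : List (Sym α)) (v : TNode) : Prop :=
  IsNode h w v ∧ v.idx + 1 < (shrinkIter h v.level w).length

/-- `v'` is the counterpart (`v ≈ v'`) of the node `v` of `T̄(w)` with respect to the
extension `x·w·y`: a node of `T̄(xwy)` of the same level with the same signature,
representing the fragment of `xwy` naturally corresponding to the fragment of `w`
represented by `v`. -/
def Counterpart (h : ℕ → Sym α → Bool) (x w y : List α) (v v' : TNode) : Prop :=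
  IsNode h (embed (x ++ w ++ y)) v' ∧
  v'.level = v.level ∧
  sigAt h (embed (x ++ w ++ y)) v' = sigAt h (embed w) v ∧
  begIdx h (embed (x ++ w ++ y)) v' = x.length + begIdx h (embed w) v ∧
  endIdx h (embed (x ++ w ++ y)) v' = x.length + endIdx h (embed w) v

/-- `v` is preserved in the extension `x·w·y`. -/
def Preserved (h : ℕ → Sym α → Bool) (x w y : List α) (v : TNode) : Prop :=
  ∃ v', Counterpart h x w y v v'

/-- `v` is right context-insensitive: preserved in every right extension. -/
def RightCI (h : ℕ → Sym α → Bool) (w : List α) (v : TNode) : Prop :=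
  ∀ y : List α, Preserved h [] w y v

/-- `v` is left context-insensitive: preserved in every left extension. -/
def LeftCI (h : ℕ → Sym α → Bool) (w : List α) (v : TNode) : Prop :=
  ∀ x : List α, Preserved h x w [] v

/-- `v` is context-insensitive: preserved in every extension. -/
def ContextIns (h : ℕ → Sym α → Bool) (w : List α) (v : TNode) : Prop :=
  ∀ x y : List α, Preserved h x w y v

/-- `u` is a (not necessarily proper) ancestor of `v` in `T̄(w)`. -/
def Ancestor (h : ℕ → Sym α → Bool) (w : List (Sym α)) (u v : TNode) : Prop :=
  v.level ≤ u.level ∧ begIdx h w u ≤ begIdx h w v ∧ endIdx h w v ≤ endIdx h w u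

/-- `u` is a proper ancestor of `v`. -/
def ProperAnc (h : ℕ → Sym α → Bool) (w : List (Sym α)) (u v : TNode) : Prop :=
  Ancestor h w u v ∧ u ≠ v

/-- The fragments of the listed nodes tile `w[a..]` consecutively from left to right. -/
def chainFrom (h : ℕ → Sym α → Bool) (w : List (Sym α)) : ℕ → List TNode → Prop
  | a, [] => a = w.length
  | a, v :: L => begIdx h w v = a ∧ chainFrom h w (endIdx h w v) L

/-- `L` is a layer of the uncompressed parse tree `T̄(w)`, listed from left to right:
every leaf has exactly one ancestor in `L` (equivalently, the fragments of
the nodes of `L` tile `w`). -/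
def IsBarLayer (h : ℕ → Sym α → Bool) (w : List (Sym α)) (L : List TNode) : Prop :=
  (∀ v ∈ L, IsNode h w v) ∧ chainFrom h w 0 L

/-- `v` is a node of the compressed parse tree `T(w)` (obtained from `T̄(w)` by
dissolving nodes with exactly one child). -/
def InCompTree (h : ℕ → Sym α → Bool) (w : List (Sym α)) (v : TNode) : Prop :=
  IsNode h w v ∧ (v.level = 0 ∨ 2 ≤ degree h w v)

/-- `L` is a layer of the compressed parse tree `T(w)`, listed from left to right. -/
def IsCompLayer (h : ℕ → Sym α → Bool) (w : List (Sym α)) (L : List TNode) : Prop :=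
  (∀ v ∈ L, InCompTree h w v) ∧ chainFrom h w 0 L

/-- `u` is the parent of `v` in the compressed parse tree `T(w)`:
the nearest proper ancestor of `v` that is a node of `T(w)`. -/
def CompParent (h : ℕ → Sym α → Bool) (w : List (Sym α)) (u v : TNode) : Prop :=
  InCompTree h w u ∧ InCompTree h w v ∧ ProperAnc h w u v ∧
  ∀ z, InCompTree h w z → ProperAnc h w z v → Ancestor h w z u

/-- `D` is the decomposition of `w` corresponding to the layer `L` of `T̄(w)`. -/
def IsDecompOf (h : ℕ → Sym α → Bool) (w : List α) (D : List (Sym α)) (L : List TNode) : Prop :=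
  IsBarLayer h (embed w) L ∧ L.map (sigAt h (embed w)) = D.map some

/-- `D` is a decomposition of `w`. -/
def IsDecomp (h : ℕ → Sym α → Bool) (w : List α) (D : List (Sym α)) : Prop :=
  ∃ L, IsDecompOf h w D L

/-- `D` is a context-insensitive decomposition of `w`. -/
def IsCIDecomp (h : ℕ → Sym α → Bool) (w : List α) (D : List (Sym α)) : Prop :=
  ∃ L, IsDecompOf h w D L ∧ ∀ v ∈ L, ContextIns h w v

/-- `D` is a right context-insensitive decomposition of `w`. -/
def IsRightCIDecomp (h : ℕ → Sym α → Bool) (w : List α) (D : List (Sym α)) : Prop :=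
  ∃ L, IsDecompOf h w D L ∧ ∀ v ∈ L, RightCI h w v

/-- `D` is a left context-insensitive decomposition of `w`. -/
def IsLeftCIDecomp (h : ℕ → Sym α → Bool) (w : List α) (D : List (Sym α)) : Prop :=
  ∃ L, IsDecompOf h w D L ∧ ∀ v ∈ L, LeftCI h w v

/-- The level of a symbol. -/
noncomputable def symLevel (h : ℕ → Sym α → Bool) : Sym α → ℕ
  | .base _ => 0
  | .pow s _ => symLevel h s + 1
  | .pair s t =>
      sInf {l | l % 2 = 0 ∧ max (symLevel h s) (symLevel h t) < l ∧
                h (l / 2) s = false ∧ h (l / 2) t = true}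

/-- `S` is a consistent symbol: it occurs in `shrink^i(w)` for some nonempty `w ∈ Σ⁺`. -/
def Consistent (h : ℕ → Sym α → Bool) (S : Sym α) : Prop :=
  ∃ (w : List α) (i : ℕ), w ≠ [] ∧ S ∈ shrinkIter h i (embed w)

/-- Longest common prefix of two lists. -/
def lcp {β : Type} [DecidableEq β] : List β → List β → List β
  | a :: l, b :: m => if a = b then a :: lcp l m else []
  | _, _ => []

end DynStr
namespace DynStr

variable {α : Type} [DecidableEq α]

/-- The nodes of the trie `T̄ᵢ` of the strings `shrink^i(w)` for `w ∈ Wᵢ`,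
identified with their values (prefixes of the stored strings). -/
def trieNodes (h : ℕ → Sym α → Bool) (W : Finset (List α)) (i : ℕ) :
    Set (List (Sym α)) :=
  {p | ∃ w ∈ W, i ≤ depth h (embed w) ∧ p <+: shrinkIter h i (embed w)}

/-- `leafᵢ(w)`, the terminal node of `T̄ᵢ` with value `shrink^i(w)`. -/
def leafNode (h : ℕ → Sym α → Bool) (i : ℕ) (w : List α) : List (Sym α) :=
  shrinkIter h i (embed w)

/-- `b = link(a)` for a node `a` of `T̄ᵢ` (`i > 0`): `b` is the node of `T̄_{i-1}`
with `val(a) = shrinkᵢ(val(b))`. -/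
def IsLink (h : ℕ → Sym α → Bool) (W : Finset (List α)) (i : ℕ)
    (a b : List (Sym α)) : Prop :=
  a ∈ trieNodes h W i ∧ b ∈ trieNodes h W (i - 1) ∧ a = shrinkStep h i b

/-- `p` is a down-node of `T̄ᵢ`: the root, a branching node, or a terminal node. -/
def IsDown (h : ℕ → Sym α → Bool) (W : Finset (List α)) (i : ℕ)
    (p : List (Sym α)) : Prop :=
  p ∈ trieNodes h W i ∧
  (p = [] ∨
   (∃ S T : Sym α, S ≠ T ∧ p ++ [S] ∈ trieNodes h W i ∧ p ++ [T] ∈ trieNodes h W i) ∨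
   ∃ w ∈ W, i ≤ depth h (embed w) ∧ p = leafNode h i w)

/-- `p` is an up-node of `T̄ᵢ`: it is `link(a)` for some down-node `a` of `T̄_{i+1}`. -/
def IsUp (h : ℕ → Sym α → Bool) (W : Finset (List α)) (i : ℕ)
    (p : List (Sym α)) : Prop :=
  p ∈ trieNodes h W i ∧ ∃ a, IsDown h W (i + 1) a ∧ IsLink h W (i + 1) a p

/-- `p` is an explicit node of the partially compressed trie `Tᵢ`. -/
def IsExplicit (h : ℕ → Sym α → Bool) (W : Finset (List α)) (i : ℕ)
    (p : List (Sym α)) : Prop :=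
  IsDown h W i p ∨ IsUp h W i p

/-- `p` is the mount of `w` in `T̄ᵢ`: the lowest node of `T̄ᵢ` whose value is a
prefix of `shrink^i(w)`. -/
def Mount (h : ℕ → Sym α → Bool) (W : Finset (List α)) (i : ℕ)
    (w : List α) (p : List (Sym α)) : Prop :=
  p ∈ trieNodes h W i ∧ p <+: shrinkIter h i (embed w) ∧
  ∀ q ∈ trieNodes h W i, q <+: shrinkIter h i (embed w) → q <+: p

/-- `a` is the nearest explicit ancestor of the node `b` of `T̄ᵢ`. -/
def NearestExplAnc (h : ℕ → Sym α → Bool) (W : Finset (List α)) (i : ℕ)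
    (b a : List (Sym α)) : Prop :=
  IsExplicit h W i a ∧ a <+: b ∧ ∀ c, IsExplicit h W i c → c <+: b → c <+: a

/-- `d` is the nearest explicit descendant of the node `b` of `T̄ᵢ`. -/
def NearestExplDesc (h : ℕ → Sym α → Bool) (W : Finset (List α)) (i : ℕ)
    (b d : List (Sym α)) : Prop :=
  IsExplicit h W i d ∧ b <+: d ∧ ∀ c, IsExplicit h W i c → b <+: c → d <+: c

/-- `anch(s)`, the anchored string of a (positive-level) symbol. -/
def anch : Sym α → List α × List α
  | .base _ => ([], [])
  | .pair s t => (strSym s, strSym t)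
  | .pow s k => (strSym s, (List.replicate (k - 1) (strSym s)).flatten)

/-- The positions of the internal boundaries of the partition of `str(s)` induced
by the production rule of `s`. -/
def cuts : Sym α → List ℕ
  | .base _ => []
  | .pair s _ => [(strSym s).length]
  | .pow s k => (List.range (k - 1)).map fun j => (j + 1) * (strSym s).length

/-- `p` occurs in `str(s)` at (0-indexed) position `t`. -/
def OccAt (s : Sym α) (p : List α) (t : ℕ) : Prop :=
  t + p.length ≤ (strSym s).length ∧ ((strSym s).drop t).take p.length = p

/-- The occurrence of `p` in `str(s)` at position `t` is anchored: it crosses one of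
the internal boundaries of the partition induced by the production rule of `s`. -/
def AnchoredOccAt (s : Sym α) (p : List α) (t : ℕ) : Prop :=
  OccAt s p t ∧ ∃ c ∈ cuts s, t < c ∧ c < t + p.length

/-- The occurrence of `p` in `str(s)` at position `t` is anchored with main anchor
`pl|pr`: `pl` is the part of the occurrence before the first internal boundary it
crosses. -/
def MainAnchorAt (s : Sym α) (p : List α) (t : ℕ) (pl pr : List α) : Prop :=
  OccAt s p t ∧ ∃ c ∈ cuts s, t < c ∧ c < t + p.length ∧
    (∀ c' ∈ cuts s, t < c' → c ≤ c') ∧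
    pl = p.take (c - t) ∧ pr = p.drop (c - t)

end DynStr
namespace DynStr

/-! ### Auxiliary infrastructure for Statement 11 -/

section Aux

variable {α : Type} [DecidableEq α]

/-! #### `runs` lemmas -/

lemma runs_cons {β : Type} [DecidableEq β] (a : β) (l : List β) :
    runs (a :: l) = match runs l with
      | [] => [(a, 1)]
      | (b, k) :: rest => if a = b then (b, k + 1) :: rest
          else (a, 1) :: (b, k) :: rest := rfl

lemma runs_cons_nil {β : Type} [DecidableEq β] {a : β} {l : List β}
    (hh : runs l = []) : runs (a :: l) = [(a, 1)] := by
  rw [runs_cons, hh]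

lemma runs_cons_cons {β : Type} [DecidableEq β] {a b : β} {k : ℕ} {l : List β}
    {rest : List (β × ℕ)} (hh : runs l = (b, k) :: rest) :
    runs (a :: l) = if a = b then (b, k + 1) :: rest
      else (a, 1) :: (b, k) :: rest := by
  rw [runs_cons, hh]

lemma runs_eq_nil_iff {β : Type} [DecidableEq β] {x : List β} :
    runs x = [] ↔ x = [] := by
  cases x with
  | nil => simp [runs]
  | cons a l =>
    simp only [runs_cons]
    constructor
    · intro hh
      exfalso
      rcases hr : runs l with _ | ⟨⟨b, k⟩, rest⟩ <;> rw [hr] at hh <;> simp at hh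
      split at hh <;> simp at hh
    · intro hh; simp at hh

/-- Inversion for `runs`. -/
lemma runs_inv {β : Type} [DecidableEq β] :
    ∀ {x : List β} {S : β} {c : ℕ} {rest : List (β × ℕ)},
      runs x = (S, c) :: rest →
      1 ≤ c ∧ ∃ y, x = List.replicate c S ++ y ∧ runs y = rest ∧
        ∀ b ∈ y.head?, b ≠ S := by
  intro x
  induction x with
  | nil => intro S c rest hh; simp [runs] at hh
  | cons a l IH =>
    intro S c rest hh
    rcases hr : runs l with _ | ⟨⟨b, k⟩, r⟩
    · rw [runs_cons_nil hr] at hh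
      simp at hh
      obtain ⟨⟨h1, h2⟩, h3⟩ := hh
      subst h1 h2
      refine ⟨le_refl 1, [], ?_, ?_, ?_⟩ <;>
        simp [runs_eq_nil_iff.mp hr, h3.symm, runs]
    · rw [runs_cons_cons hr] at hh
      obtain ⟨hk, y, hly, hry, hhead⟩ := IH hr
      by_cases hab : a = b
      · rw [if_pos hab] at hh
        obtain ⟨⟨h1, h2⟩, h3⟩ : (b = S ∧ k + 1 = c) ∧ r = rest := by
          simpa using hh
        subst h1 h2 h3 hab
        refine ⟨by omega, y, ?_, hry, hhead⟩
        rw [hly, List.replicate_succ]; rfl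
      · rw [if_neg hab] at hh
        obtain ⟨⟨h1, h2⟩, h3⟩ : (a = S ∧ 1 = c) ∧ (b, k) :: r = rest := by
          simpa using hh
        subst h1 h2
        refine ⟨le_refl 1, l, by simp, h3 ▸ hr, ?_⟩
        intro e he hne
        subst hne
        rw [hly] at he
        obtain ⟨k', rfl⟩ := Nat.exists_eq_succ_of_ne_zero (by omega : k ≠ 0)
        rw [List.replicate_succ] at he
        exact hab (by simpa using he : b = e).symm

lemma runs_head_eq_cons {β : Type} [DecidableEq β] {x : List β} {S : β} {c : ℕ}
    {rest : List (β × ℕ)} (hh : runs x = (S, c) :: rest) :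
    ∃ t, x = S :: t := by
  obtain ⟨hc, y, hy, -, -⟩ := runs_inv hh
  obtain ⟨c', rfl⟩ := Nat.exists_eq_succ_of_ne_zero (by omega : c ≠ 0)
  rw [List.replicate_succ] at hy
  exact ⟨_, hy⟩

/-- Construction for `runs`. -/
lemma runs_replicate_append {β : Type} [DecidableEq β] {S : β} :
    ∀ {c : ℕ}, 1 ≤ c → ∀ {t : List β}, (∀ b ∈ t.head?, b ≠ S) →
      runs (List.replicate c S ++ t) = (S, c) :: runs t := by
  intro c hc
  induction c with
  | zero => omega
  | succ c IH =>
    intro t ht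
    by_cases hc0 : c = 0
    · subst hc0
      simp only [List.replicate_succ, List.replicate_zero, List.nil_append,
        List.cons_append, List.nil_append]
      rcases hr : runs t with _ | ⟨⟨b, k⟩, r⟩
      · simp [runs_cons_nil hr, hr]
      · obtain ⟨t', rfl⟩ := runs_head_eq_cons hr
        have hsb : S ≠ b := by
          have := ht b (by simp)
          exact fun e => this e.symm
        rw [runs_cons_cons hr, if_neg hsb]
    · have hc1 : 1 ≤ c := by omega
      have IH' := IH hc1 ht
      rw [List.replicate_succ, List.cons_append, runs_cons_cons IH', if_pos rfl]

lemma runs_replicate {β : Type} [DecidableEq β] {S : β} {c : ℕ} (hc : 1 ≤ c) :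
    runs (List.replicate c S) = [(S, c)] := by
  have := runs_replicate_append (S := S) hc (t := []) (by simp)
  simpa [runs] using this

lemma rleLen_nil {β : Type} [DecidableEq β] : rleLen ([] : List β) = 0 := rfl

lemma rleLen_replicate_le_one {β : Type} [DecidableEq β] (S : β) (c : ℕ) :
    rleLen (List.replicate c S) ≤ 1 := by
  rcases Nat.eq_zero_or_pos c with hc | hc
  · subst hc; simp [rleLen, runs]
  · rw [rleLen, runs_replicate hc]; simp

/-! #### `lcp` lemmas -/

lemma lcp_nil_left {β : Type} [DecidableEq β] (t : List β) :
    lcp ([] : List β) t = [] := by cases t <;> rfl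

lemma lcp_nil_right {β : Type} [DecidableEq β] (t : List β) :
    lcp t ([] : List β) = [] := by cases t <;> rfl

lemma lcp_cons {β : Type} [DecidableEq β] (a b : β) (s t : List β) :
    lcp (a :: s) (b :: t) = if a = b then a :: lcp s t else [] := rfl

lemma lcp_prefix_left {β : Type} [DecidableEq β] :
    ∀ (s t : List β), lcp s t <+: s := by
  intro s
  induction s with
  | nil => intro t; simp [lcp_nil_left]
  | cons a s IH =>
    intro t
    cases t with
    | nil => simp [lcp_nil_right]
    | cons b t =>
      rw [lcp_cons]
      split
      · exact List.cons_prefix_cons.mpr ⟨rfl, IH t⟩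
      · simp

lemma lcp_prefix_right {β : Type} [DecidableEq β] :
    ∀ (s t : List β), lcp s t <+: t := by
  intro s
  induction s with
  | nil => intro t; simp [lcp_nil_left]
  | cons a s IH =>
    intro t
    cases t with
    | nil => simp [lcp_nil_right]
    | cons b t =>
      rw [lcp_cons]
      split
      · next hh => subst hh; exact List.cons_prefix_cons.mpr ⟨rfl, IH t⟩
      · simp

lemma prefix_lcp {β : Type} [DecidableEq β] :
    ∀ {p s t : List β}, p <+: s → p <+: t → p <+: lcp s t := by
  intro p
  induction p with
  | nil => intro s t _ _; simp
  | cons a p IH =>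
    intro s t hs ht
    obtain ⟨s', rfl⟩ := hs
    obtain ⟨t', rfl⟩ := ht
    rw [List.cons_append, List.cons_append, lcp_cons, if_pos rfl]
    exact List.cons_prefix_cons.mpr ⟨rfl, IH (List.prefix_append p s') (List.prefix_append p t')⟩

lemma lcp_append {β : Type} [DecidableEq β] :
    ∀ (r s t : List β), lcp (r ++ s) (r ++ t) = r ++ lcp s t := by
  intro r
  induction r with
  | nil => intro s t; rfl
  | cons a r IH =>
    intro s t
    simp [List.cons_append, lcp_cons, IH]

lemma lcp_comm {β : Type} [DecidableEq β] :
    ∀ (s t : List β), lcp s t = lcp t s := by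
  intro s
  induction s with
  | nil => intro t; rw [lcp_nil_left, lcp_nil_right]
  | cons a s IH =>
    intro t
    cases t with
    | nil => rw [lcp_nil_left, lcp_nil_right]
    | cons b t =>
      rw [lcp_cons, lcp_cons]
      by_cases hh : a = b
      · subst hh; rw [if_pos rfl, if_pos rfl, IH]
      · rw [if_neg hh, if_neg (Ne.symm hh)]

lemma lcp_ne_heads {β : Type} [DecidableEq β] {a b : β} (s t : List β)
    (hh : a ≠ b) : lcp (a :: s) (b :: t) = [] := by
  rw [lcp_cons, if_neg hh]

/-! #### `rle` lemmas -/

lemma rle_runs (x : List (Sym α)) :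
    rle x = (runs x).map (fun p => if 2 ≤ p.2 then Sym.pow p.1 p.2 else p.1) := rfl

lemma rle_nil : rle ([] : List (Sym α)) = [] := rfl

lemma rle_eq_nil_iff {x : List (Sym α)} : rle x = [] ↔ x = [] := by
  rw [rle_runs, List.map_eq_nil_iff, runs_eq_nil_iff]

lemma pair_prefix_replicate {β : Type} {S : β} {c : ℕ} (hc : 2 ≤ c) :
    [S, S] <+: List.replicate c S := by
  obtain ⟨c', rfl⟩ := Nat.exists_eq_add_of_le hc
  rw [List.replicate_add]
  exact List.prefix_append _ _

lemma mem_head_replicate_append {β : Type} {S : β} {c : ℕ} (hc : 1 ≤ c)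
    (t : List β) : S ∈ List.replicate c S ++ t := by
  refine List.mem_append_left _ ?_
  rw [List.mem_replicate]
  exact ⟨by omega, rfl⟩

lemma drop_append_left' {β : Type} : ∀ (r s : List β) (n : ℕ),
    (r ++ s).drop (r.length + n) = s.drop n := by
  intro r
  induction r with
  | nil => intro s n; simp
  | cons a r IH =>
    intro s n
    simpa [Nat.succ_add] using IH s n

lemma mem_rle : ∀ {x : List (Sym α)} {X : Sym α}, X ∈ rle x →
    X ∈ x ∨ ∃ S c, 2 ≤ c ∧ X = Sym.pow S c ∧ [S, S] <:+: x := by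
  suffices hkey : ∀ (n : ℕ) (x : List (Sym α)) (X : Sym α), x.length ≤ n → X ∈ rle x →
      X ∈ x ∨ ∃ S c, 2 ≤ c ∧ X = Sym.pow S c ∧ [S, S] <:+: x by
    intro x X hX; exact hkey x.length x X le_rfl hX
  intro n
  induction n with
  | zero =>
    intro x X hlen hX
    have : x = [] := List.length_eq_zero_iff.mp (Nat.le_zero.mp hlen)
    subst this; simp [rle_runs, runs] at hX
  | succ n IH =>
    intro x X hlen hX
    rcases hr : runs x with _ | ⟨⟨S, c⟩, rx⟩
    · rw [rle_runs, hr] at hX; simp at hX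
    · obtain ⟨hc, x₂, hx₂, hrx₂, hhd⟩ := runs_inv hr
      rw [rle_runs, hr] at hX
      simp only [List.map_cons, List.mem_cons] at hX
      rcases hX with hX | hX
      · by_cases h2 : 2 ≤ c
        · right
          refine ⟨S, c, h2, by simpa [h2] using hX, ?_⟩
          rw [hx₂]
          exact ((pair_prefix_replicate h2).trans (List.prefix_append _ _)).isInfix
        · left
          have hXS : X = S := by simpa [h2] using hX
          rw [hXS, hx₂]
          exact mem_head_replicate_append hc _
      · have hX₂ : X ∈ rle x₂ := by rw [rle_runs, hrx₂]; simpa using hX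
        have hlen₂ : x₂.length ≤ n := by
          rw [hx₂, List.length_append, List.length_replicate] at hlen; omega
        rcases IH x₂ X hlen₂ hX₂ with hm | ⟨S', c', h1, h2, h3⟩
        · left; rw [hx₂]; exact List.mem_append_right _ hm
        · right
          refine ⟨S', c', h1, h2, h3.trans ?_⟩
          rw [hx₂]
          exact (List.suffix_append _ _).isInfix

lemma adj_rle : ∀ {x : List (Sym α)} {X X' : Sym α}, [X, X'] <:+: rle x →
    ∃ S c S' c', 1 ≤ c ∧ 1 ≤ c' ∧ S ≠ S' ∧
      X = (if 2 ≤ c then Sym.pow S c else S) ∧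
      X' = (if 2 ≤ c' then Sym.pow S' c' else S') ∧
      (List.replicate c S ++ List.replicate c' S') <:+: x := by
  suffices hkey : ∀ (n : ℕ) (x : List (Sym α)) (X X' : Sym α), x.length ≤ n →
      [X, X'] <:+: rle x →
      ∃ S c S' c', 1 ≤ c ∧ 1 ≤ c' ∧ S ≠ S' ∧
        X = (if 2 ≤ c then Sym.pow S c else S) ∧
        X' = (if 2 ≤ c' then Sym.pow S' c' else S') ∧
        (List.replicate c S ++ List.replicate c' S') <:+: x by
    intro x X X' hX; exact hkey x.length x X X' le_rfl hX
  intro n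
  induction n with
  | zero =>
    intro x X X' hlen hX
    have : x = [] := List.length_eq_zero_iff.mp (Nat.le_zero.mp hlen)
    subst this
    simp [rle_runs, runs] at hX
  | succ n IH =>
    intro x X X' hlen hinf
    rcases hr : runs x with _ | ⟨⟨S, c⟩, rx⟩
    · rw [rle_runs, hr] at hinf
      exact absurd hinf.length_le (by simp)
    · obtain ⟨hc, x₂, hx₂, hrx₂, hhd⟩ := runs_inv hr
      have hrle : rle x = (if 2 ≤ c then Sym.pow S c else S) :: rle x₂ := by
        rw [rle_runs, hr, List.map_cons, rle_runs, hrx₂]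
      rw [hrle] at hinf
      rcases List.infix_cons_iff.mp hinf with hpre | hinf₂
      · -- starts at the head
        obtain ⟨t, ht⟩ := hpre
        rw [List.cons_append, List.cons_append, List.nil_append] at ht
        obtain ⟨hX, ht₂⟩ := List.cons_eq_cons.mp ht
        rcases hr₂ : runs x₂ with _ | ⟨⟨S', c'⟩, rx₂⟩
        · rw [rle_runs, hr₂] at ht₂; simp at ht₂
        · obtain ⟨hc', x₃, hx₃, hrx₃, hhd'⟩ := runs_inv hr₂
          have hrle₂ : rle x₂ = (if 2 ≤ c' then Sym.pow S' c' else S') :: rle x₃ := by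
            rw [rle_runs, hr₂, List.map_cons, rle_runs, hrx₃]
          rw [hrle₂] at ht₂
          obtain ⟨hX', -⟩ := List.cons_eq_cons.mp ht₂
          have hSS' : S ≠ S' := by
            obtain ⟨t', ht'⟩ := runs_head_eq_cons hr₂
            exact Ne.symm (hhd S' (by simp [ht']))
          refine ⟨S, c, S', c', hc, hc', hSS', hX, hX', ?_⟩
          rw [hx₂, hx₃, ← List.append_assoc]
          exact ((List.prefix_append _ _)).isInfix
      · have hlen₂ : x₂.length ≤ n := by
          rw [hx₂, List.length_append, List.length_replicate] at hlen; omega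
        obtain ⟨S', c', S'', c'', h1, h2, h3, h4, h5, h6⟩ := IH x₂ X X' hlen₂ hinf₂
        refine ⟨S', c', S'', c'', h1, h2, h3, h4, h5, h6.trans ?_⟩
        rw [hx₂]
        exact (List.suffix_append _ _).isInfix

/-- Lifting prefixes through `rle`, assuming no `pow`/run ambiguity. -/
lemma rle_prefix_lift : ∀ {x y : List (Sym α)},
    (∀ S c, 2 ≤ c →
      ¬(Sym.pow S c ∈ x ∧ [S, S] <:+: y) ∧ ¬(Sym.pow S c ∈ y ∧ [S, S] <:+: x)) →
    rle x <+: rle y →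
    x <+: y ∧ rle y = rle x ++ rle (List.drop x.length y) := by
  suffices hkey : ∀ (n : ℕ) (x y : List (Sym α)), x.length ≤ n →
      (∀ S c, 2 ≤ c →
        ¬(Sym.pow S c ∈ x ∧ [S, S] <:+: y) ∧ ¬(Sym.pow S c ∈ y ∧ [S, S] <:+: x)) →
      rle x <+: rle y →
      x <+: y ∧ rle y = rle x ++ rle (List.drop x.length y) by
    intro x y H hp; exact hkey x.length x y le_rfl H hp
  intro n
  induction n with
  | zero =>
    intro x y hlen H hp
    have : x = [] := List.length_eq_zero_iff.mp (Nat.le_zero.mp hlen)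
    subst this
    exact ⟨⟨y, rfl⟩, by simp [rle_nil]⟩
  | succ n IH =>
    intro x y hlen H hp
    rcases hr : runs x with _ | ⟨⟨S, c⟩, rx⟩
    · have : x = [] := runs_eq_nil_iff.mp hr
      subst this
      exact ⟨⟨y, rfl⟩, by simp [rle_nil]⟩
    · obtain ⟨hc, x₂, hx₂, hrx₂, hhd⟩ := runs_inv hr
      have hrlex : rle x = (if 2 ≤ c then Sym.pow S c else S) :: rle x₂ := by
        rw [rle_runs, hr, List.map_cons, rle_runs, hrx₂]
      rcases hry : runs y with _ | ⟨⟨S', c'⟩, ry⟩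
      · rw [hrlex] at hp
        have hy0 : rle y = [] := by rw [rle_runs, hry]; rfl
        rw [hy0] at hp
        exact absurd hp.length_le (by simp)
      · obtain ⟨hc', y₂, hy₂, hry₂, hhd'⟩ := runs_inv hry
        have hrley : rle y = (if 2 ≤ c' then Sym.pow S' c' else S') :: rle y₂ := by
          rw [rle_runs, hry, List.map_cons, rle_runs, hry₂]
        rw [hrlex, hrley] at hp
        have hE : (if 2 ≤ c then Sym.pow S c else S)
            = (if 2 ≤ c' then Sym.pow S' c' else S') :=
          (List.cons_prefix_cons.mp hp).1
        have hp₂ : rle x₂ <+: rle y₂ := (List.cons_prefix_cons.mp hp).2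
        -- the two runs are equal
        have hrun : S = S' ∧ c = c' := by
          by_cases h2 : 2 ≤ c <;> by_cases h2' : 2 ≤ c'
          · rw [if_pos h2, if_pos h2'] at hE
            injection hE with e1 e2
            exact ⟨e1, e2⟩
          · rw [if_pos h2, if_neg h2'] at hE
            exfalso
            refine (H S c h2).2 ⟨?_, ?_⟩
            · rw [hy₂, ← hE]; exact mem_head_replicate_append hc' _
            · rw [hx₂]
              exact ((pair_prefix_replicate h2).trans (List.prefix_append _ _)).isInfix
          · rw [if_neg h2, if_pos h2'] at hE
            exfalso
            refine (H S' c' h2').1 ⟨?_, ?_⟩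
            · rw [hx₂, hE]; exact mem_head_replicate_append hc _
            · rw [hy₂]
              exact ((pair_prefix_replicate h2').trans (List.prefix_append _ _)).isInfix
          · rw [if_neg h2, if_neg h2'] at hE
            exact ⟨hE, by omega⟩
        obtain ⟨rfl, rfl⟩ := hrun
        have hlen₂ : x₂.length ≤ n := by
          rw [hx₂, List.length_append, List.length_replicate] at hlen; omega
        have H₂ : ∀ T k, 2 ≤ k →
            ¬(Sym.pow T k ∈ x₂ ∧ [T, T] <:+: y₂) ∧
            ¬(Sym.pow T k ∈ y₂ ∧ [T, T] <:+: x₂) := by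
          intro T k hk
          have hx₂' : Sym.pow T k ∈ x₂ → Sym.pow T k ∈ x := by
            intro hm; rw [hx₂]; exact List.mem_append_right _ hm
          have hy₂' : Sym.pow T k ∈ y₂ → Sym.pow T k ∈ y := by
            intro hm; rw [hy₂]; exact List.mem_append_right _ hm
          have hiy : [T, T] <:+: y₂ → [T, T] <:+: y := by
            intro hm; rw [hy₂]; exact hm.trans (List.suffix_append _ _).isInfix
          have hix : [T, T] <:+: x₂ → [T, T] <:+: x := by
            intro hm; rw [hx₂]; exact hm.trans (List.suffix_append _ _).isInfix
          exact ⟨fun ⟨a, b⟩ => (H T k hk).1 ⟨hx₂' a, hiy b⟩,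
                 fun ⟨a, b⟩ => (H T k hk).2 ⟨hy₂' a, hix b⟩⟩
        obtain ⟨hpre₂, hsplit₂⟩ := IH x₂ y₂ hlen₂ H₂ hp₂
        constructor
        · rw [hx₂, hy₂]
          obtain ⟨r, rfl⟩ := hpre₂
          rw [← List.append_assoc]
          exact List.prefix_append _ _
        · have hdrop : List.drop x.length y = List.drop x₂.length y₂ := by
            rw [hx₂, hy₂]
            have hq := drop_append_left' (List.replicate c S) y₂ x₂.length
            simpa using hq
          rw [hrley, hrlex, hsplit₂, hdrop, List.cons_append]

/-! #### `compress` lemmas -/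

lemma compress_nil (g : Sym α → Bool) : compress g [] = [] := rfl

lemma compress_singleton (g : Sym α → Bool) (a : Sym α) : compress g [a] = [a] := rfl

lemma compress_cons₂ (g : Sym α → Bool) (a b : Sym α) (l : List (Sym α)) :
    compress g (a :: b :: l) =
      if g a = false ∧ g b = true then Sym.pair a b :: compress g l
      else a :: compress g (b :: l) := rfl

lemma compress_eq_nil_iff {g : Sym α → Bool} {x : List (Sym α)} :
    compress g x = [] ↔ x = [] := by
  rcases x with _ | ⟨a, _ | ⟨b, l⟩⟩
  · simp [compress_nil]
  · simp [compress_singleton]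
  · rw [compress_cons₂]
    split <;> simp

/-- Inversion for the first block of `compress`. -/
lemma compress_cons_inv {g : Sym α → Bool} {x : List (Sym α)} {X : Sym α}
    {rest : List (Sym α)} (hh : compress g x = X :: rest) :
    (∃ t, x = X :: t ∧ rest = compress g t ∧
        ∀ b ∈ t.head?, ¬(g X = false ∧ g b = true)) ∨
    (∃ Y Z t, X = Sym.pair Y Z ∧ g Y = false ∧ g Z = true ∧
        x = Y :: Z :: t ∧ rest = compress g t) := by
  rcases x with _ | ⟨a, _ | ⟨b, l⟩⟩
  · simp [compress_nil] at hh
  · rw [compress_singleton] at hh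
    obtain ⟨rfl, rfl⟩ := List.cons_eq_cons.mp hh
    exact Or.inl ⟨[], rfl, rfl, by simp⟩
  · rw [compress_cons₂] at hh
    by_cases hcond : g a = false ∧ g b = true
    · rw [if_pos hcond] at hh
      obtain ⟨rfl, rfl⟩ := List.cons_eq_cons.mp hh
      exact Or.inr ⟨a, b, l, rfl, hcond.1, hcond.2, rfl, rfl⟩
    · rw [if_neg hcond] at hh
      obtain ⟨rfl, rfl⟩ := List.cons_eq_cons.mp hh
      exact Or.inl ⟨b :: l, rfl, rfl, by simpa using hcond⟩

lemma mem_compress {g : Sym α → Bool} : ∀ {x : List (Sym α)} {X : Sym α},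
    X ∈ compress g x →
    X ∈ x ∨ ∃ Y Z, X = Sym.pair Y Z ∧ g Y = false ∧ g Z = true ∧ [Y, Z] <:+: x := by
  suffices hkey : ∀ (n : ℕ) (x : List (Sym α)) (X : Sym α), x.length ≤ n →
      X ∈ compress g x →
      X ∈ x ∨ ∃ Y Z, X = Sym.pair Y Z ∧ g Y = false ∧ g Z = true ∧ [Y, Z] <:+: x by
    intro x X hX; exact hkey x.length x X le_rfl hX
  intro n
  induction n with
  | zero =>
    intro x X hlen hX
    have : x = [] := List.length_eq_zero_iff.mp (Nat.le_zero.mp hlen)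
    subst this; simp [compress_nil] at hX
  | succ n IH =>
    intro x X hlen hX
    rcases x with _ | ⟨a, _ | ⟨b, l⟩⟩
    · simp [compress_nil] at hX
    · rw [compress_singleton] at hX
      simp at hX
      exact Or.inl (by simp [hX])
    · rw [compress_cons₂] at hX
      by_cases hcond : g a = false ∧ g b = true
      · rw [if_pos hcond] at hX
        rcases List.mem_cons.mp hX with rfl | hX₂
        · exact Or.inr ⟨a, b, rfl, hcond.1, hcond.2, ⟨[], l, rfl⟩⟩
        · have hlen₂ : l.length ≤ n := by simp at hlen; omega
          rcases IH l X hlen₂ hX₂ with hm | ⟨Y, Z, h1, h2, h3, h4⟩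
          · exact Or.inl (by simp [hm])
          · refine Or.inr ⟨Y, Z, h1, h2, h3, h4.trans ?_⟩
            exact ((List.suffix_cons _ _).trans (List.suffix_cons _ _)).isInfix
      · rw [if_neg hcond] at hX
        rcases List.mem_cons.mp hX with rfl | hX₂
        · exact Or.inl (List.mem_cons_self)
        · have hlen₂ : (b :: l).length ≤ n := by simp at hlen ⊢; omega
          rcases IH (b :: l) X hlen₂ hX₂ with hm | ⟨Y, Z, h1, h2, h3, h4⟩
          · exact Or.inl (List.mem_cons_of_mem _ hm)
          · refine Or.inr ⟨Y, Z, h1, h2, h3, h4.trans (List.suffix_cons _ _).isInfix⟩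

lemma adj_compress {g : Sym α → Bool} : ∀ {x : List (Sym α)} {X X' : Sym α},
    [X, X'] <:+: compress g x →
    ∃ p q, (p = [X] ∨ ∃ Y Z, X = Sym.pair Y Z ∧ p = [Y, Z] ∧ g Y = false ∧ g Z = true) ∧
      (q = [X'] ∨ ∃ Y Z, X' = Sym.pair Y Z ∧ q = [Y, Z] ∧ g Y = false ∧ g Z = true) ∧
      (p ++ q) <:+: x ∧
      (p = [X] → q = [X'] → ¬(g X = false ∧ g X' = true)) := by
  suffices hkey : ∀ (n : ℕ) (x : List (Sym α)) (X X' : Sym α), x.length ≤ n →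
      [X, X'] <:+: compress g x →
      ∃ p q, (p = [X] ∨ ∃ Y Z, X = Sym.pair Y Z ∧ p = [Y, Z] ∧ g Y = false ∧ g Z = true) ∧
        (q = [X'] ∨ ∃ Y Z, X' = Sym.pair Y Z ∧ q = [Y, Z] ∧ g Y = false ∧ g Z = true) ∧
        (p ++ q) <:+: x ∧
        (p = [X] → q = [X'] → ¬(g X = false ∧ g X' = true)) by
    intro x X X' hX; exact hkey x.length x X X' le_rfl hX
  intro n
  induction n with
  | zero =>
    intro x X X' hlen hinf
    have : x = [] := List.length_eq_zero_iff.mp (Nat.le_zero.mp hlen)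
    subst this
    rw [compress_nil] at hinf
    simpa using hinf.length_le
  | succ n IH =>
    intro x X X' hlen hinf
    rcases x with _ | ⟨a, _ | ⟨b, l⟩⟩
    · rw [compress_nil] at hinf
      simpa using hinf.length_le
    · rw [compress_singleton] at hinf
      simpa using hinf.length_le
    · rw [compress_cons₂] at hinf
      by_cases hcond : g a = false ∧ g b = true
      · rw [if_pos hcond] at hinf
        rcases List.infix_cons_iff.mp hinf with hpre | hinf₂
        · obtain ⟨t, ht⟩ := hpre
          rw [List.cons_append, List.cons_append, List.nil_append] at ht
          obtain ⟨hX, ht₂⟩ := List.cons_eq_cons.mp ht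
          rcases compress_cons_inv ht₂.symm with ⟨t', hlt, -, -⟩ |
              ⟨Y, Z, t', hX', hgY, hgZ, hlt, -⟩
          · refine ⟨[a, b], [X'], Or.inr ⟨a, b, hX, rfl, hcond.1, hcond.2⟩,
              Or.inl rfl, ?_, ?_⟩
            · rw [hlt]
              exact ⟨[], t', rfl⟩
            · intro hpa; simp at hpa
          · refine ⟨[a, b], [Y, Z], Or.inr ⟨a, b, hX, rfl, hcond.1, hcond.2⟩,
              Or.inr ⟨Y, Z, hX', rfl, hgY, hgZ⟩, ?_, ?_⟩
            · rw [hlt]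
              exact ⟨[], t', rfl⟩
            · intro hpa; simp at hpa
        · have hlen₂ : l.length ≤ n := by simp at hlen; omega
          obtain ⟨p, q, h1, h2, h3, h4⟩ := IH l X X' hlen₂ hinf₂
          exact ⟨p, q, h1, h2,
            h3.trans ((List.suffix_cons _ _).trans (List.suffix_cons _ _)).isInfix, h4⟩
      · rw [if_neg hcond] at hinf
        rcases List.infix_cons_iff.mp hinf with hpre | hinf₂
        · obtain ⟨t, ht⟩ := hpre
          rw [List.cons_append, List.cons_append, List.nil_append] at ht
          obtain ⟨hX, ht₂⟩ := List.cons_eq_cons.mp ht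
          rcases compress_cons_inv ht₂.symm with ⟨t', hlt, -, -⟩ |
              ⟨Y, Z, t', hX', hgY, hgZ, hlt, -⟩
          · -- b :: l = X' :: t'
            obtain ⟨hb, hl⟩ := List.cons_eq_cons.mp hlt
            refine ⟨[X], [X'], Or.inl rfl, Or.inl rfl, ?_, ?_⟩
            · exact ⟨[], l, by simp [hX, hb]⟩
            · intro _ _
              rw [hX, ← hb]
              exact hcond
          · obtain ⟨hbY, hl'⟩ := List.cons_eq_cons.mp hlt
            refine ⟨[X], [Y, Z], Or.inl rfl, Or.inr ⟨Y, Z, hX', rfl, hgY, hgZ⟩, ?_, ?_⟩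
            · exact ⟨[], t', by simp [hX, hbY, hl']⟩
            · intro _ hq; simp at hq
        · have hlen₂ : (b :: l).length ≤ n := by simp at hlen ⊢; omega
          obtain ⟨p, q, h1, h2, h3, h4⟩ := IH (b :: l) X X' hlen₂ hinf₂
          exact ⟨p, q, h1, h2, h3.trans (List.suffix_cons _ _).isInfix, h4⟩

/-- Lifting prefixes through `compress`, assuming no `pair`/block ambiguity. -/
lemma compress_prefix_lift {g : Sym α → Bool} : ∀ {x y : List (Sym α)},
    (∀ Y Z, g Y = false → g Z = true →
      ¬(Sym.pair Y Z ∈ x ∧ [Y, Z] <:+: y) ∧ ¬(Sym.pair Y Z ∈ y ∧ [Y, Z] <:+: x)) →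
    compress g x <+: compress g y →
    x <+: y ∧ compress g y = compress g x ++ compress g (List.drop x.length y) := by
  suffices hkey : ∀ (n : ℕ) (x y : List (Sym α)), x.length ≤ n →
      (∀ Y Z, g Y = false → g Z = true →
        ¬(Sym.pair Y Z ∈ x ∧ [Y, Z] <:+: y) ∧ ¬(Sym.pair Y Z ∈ y ∧ [Y, Z] <:+: x)) →
      compress g x <+: compress g y →
      x <+: y ∧ compress g y = compress g x ++ compress g (List.drop x.length y) by
    intro x y H hp; exact hkey x.length x y le_rfl H hp
  intro n
  induction n with
  | zero =>
    intro x y hlen H hp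
    have : x = [] := List.length_eq_zero_iff.mp (Nat.le_zero.mp hlen)
    subst this
    exact ⟨⟨y, rfl⟩, by simp [compress_nil]⟩
  | succ n IH =>
    intro x y hlen H hp
    rcases x with _ | ⟨a, _ | ⟨a2, x2⟩⟩
    · exact ⟨⟨y, rfl⟩, by simp [compress_nil]⟩
    · -- x = [a]
      rw [compress_singleton] at hp
      obtain ⟨t, ht⟩ := hp
      rw [List.cons_append, List.nil_append] at ht
      rcases compress_cons_inv ht.symm with ⟨t', hyt, hrest, -⟩ |
          ⟨Y, Z, t', hXa, hgY, hgZ, hyt, -⟩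
      · refine ⟨?_, ?_⟩
        · rw [hyt]
          exact List.cons_prefix_cons.mpr ⟨rfl, List.nil_prefix⟩
        · rw [ht.symm, compress_singleton, hyt]
          simp [hrest]
      · exfalso
        refine (H Y Z hgY hgZ).1 ⟨?_, ?_⟩
        · rw [← hXa]; exact List.mem_cons_self
        · rw [hyt]; exact ⟨[], t', rfl⟩
    · by_cases hcond : g a = false ∧ g a2 = true
      · have hcx : compress g (a :: a2 :: x2) = Sym.pair a a2 :: compress g x2 := by
          rw [compress_cons₂, if_pos hcond]
        rw [hcx] at hp
        obtain ⟨t, ht⟩ := hp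
        rw [List.cons_append] at ht
        rcases compress_cons_inv ht.symm with ⟨t', hyt, hrest, -⟩ |
            ⟨Y, Z, t', hXa, hgY, hgZ, hyt, hrest⟩
        · exfalso
          refine (H a a2 hcond.1 hcond.2).2 ⟨?_, ?_⟩
          · rw [hyt]; exact List.mem_cons_self
          · exact ⟨[], x2, rfl⟩
        · injection hXa with e1 e2
          subst e1 e2
          have hp2 : compress g x2 <+: compress g t' := ⟨t, hrest⟩
          have hlen₂ : x2.length ≤ n := by simp at hlen; omega
          have H₂ : ∀ Y Z, g Y = false → g Z = true →
              ¬(Sym.pair Y Z ∈ x2 ∧ [Y, Z] <:+: t') ∧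
              ¬(Sym.pair Y Z ∈ t' ∧ [Y, Z] <:+: x2) := by
            intro Y Z h1 h2
            have hmx : Sym.pair Y Z ∈ x2 → Sym.pair Y Z ∈ a :: a2 :: x2 := by
              intro hm; exact List.mem_cons_of_mem _ (List.mem_cons_of_mem _ hm)
            have hmy : Sym.pair Y Z ∈ t' → Sym.pair Y Z ∈ y := by
              intro hm; rw [hyt]
              exact List.mem_cons_of_mem _ (List.mem_cons_of_mem _ hm)
            have hiy : [Y, Z] <:+: t' → [Y, Z] <:+: y := by
              intro hm; rw [hyt]
              exact hm.trans ((List.suffix_cons _ _).trans (List.suffix_cons _ _)).isInfix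
            have hix : [Y, Z] <:+: x2 → [Y, Z] <:+: a :: a2 :: x2 := by
              intro hm
              exact hm.trans ((List.suffix_cons _ _).trans (List.suffix_cons _ _)).isInfix
            exact ⟨fun ⟨u, v⟩ => (H Y Z h1 h2).1 ⟨hmx u, hiy v⟩,
                   fun ⟨u, v⟩ => (H Y Z h1 h2).2 ⟨hmy u, hix v⟩⟩
          obtain ⟨hpre2, hsplit2⟩ := IH x2 t' hlen₂ H₂ hp2
          refine ⟨?_, ?_⟩
          · rw [hyt]
            exact List.cons_prefix_cons.mpr ⟨rfl, List.cons_prefix_cons.mpr ⟨rfl, hpre2⟩⟩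
          · have hcy2 : compress g y = Sym.pair a a2 :: compress g t' := by
              rw [hyt, compress_cons₂, if_pos hcond]
            have hdrop : List.drop (a :: a2 :: x2).length y = List.drop x2.length t' := by
              rw [hyt]; rfl
            rw [hcy2, hsplit2, hcx, hdrop, List.cons_append]
      · have hcx : compress g (a :: a2 :: x2) = a :: compress g (a2 :: x2) := by
          rw [compress_cons₂, if_neg hcond]
        rw [hcx] at hp
        obtain ⟨t, ht⟩ := hp
        rw [List.cons_append] at ht
        rcases compress_cons_inv ht.symm with ⟨t', hyt, hrest, -⟩ |
            ⟨Y, Z, t', hXa, hgY, hgZ, hyt, -⟩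
        · have hp2 : compress g (a2 :: x2) <+: compress g t' := ⟨t, hrest⟩
          have hlen₂ : (a2 :: x2).length ≤ n := by simp at hlen ⊢; omega
          have H₂ : ∀ Y Z, g Y = false → g Z = true →
              ¬(Sym.pair Y Z ∈ (a2 :: x2) ∧ [Y, Z] <:+: t') ∧
              ¬(Sym.pair Y Z ∈ t' ∧ [Y, Z] <:+: (a2 :: x2)) := by
            intro Y Z h1 h2
            have hmx : Sym.pair Y Z ∈ a2 :: x2 → Sym.pair Y Z ∈ a :: a2 :: x2 :=
              fun hm => List.mem_cons_of_mem _ hm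
            have hmy : Sym.pair Y Z ∈ t' → Sym.pair Y Z ∈ y := by
              intro hm; rw [hyt]; exact List.mem_cons_of_mem _ hm
            have hiy : [Y, Z] <:+: t' → [Y, Z] <:+: y := by
              intro hm; rw [hyt]; exact hm.trans (List.suffix_cons _ _).isInfix
            have hix : [Y, Z] <:+: a2 :: x2 → [Y, Z] <:+: a :: a2 :: x2 :=
              fun hm => hm.trans (List.suffix_cons _ _).isInfix
            exact ⟨fun ⟨u, v⟩ => (H Y Z h1 h2).1 ⟨hmx u, hiy v⟩,
                   fun ⟨u, v⟩ => (H Y Z h1 h2).2 ⟨hmy u, hix v⟩⟩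
          obtain ⟨hpre2, hsplit2⟩ := IH (a2 :: x2) t' hlen₂ H₂ hp2
          refine ⟨?_, ?_⟩
          · rw [hyt]
            exact List.cons_prefix_cons.mpr ⟨rfl, hpre2⟩
          · have hcy2 : compress g y = a :: compress g t' := by
              rw [hyt] at ht ⊢
              rw [← ht, hrest]
            have hdrop : List.drop (a :: a2 :: x2).length y
                = List.drop (a2 :: x2).length t' := by
              rw [hyt]; rfl
            rw [hcy2, hsplit2, hcx, hdrop, List.cons_append]
        · exfalso
          refine (H Y Z hgY hgZ).1 ⟨?_, ?_⟩
          · rw [← hXa]; exact List.mem_cons_self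
          · rw [hyt]; exact ⟨[], t', rfl⟩

/-! #### `shrinkIter`, `symLevel` and the occurrence invariants -/

lemma shrinkIter_zero (h : ℕ → Sym α → Bool) (w : List (Sym α)) :
    shrinkIter h 0 w = w := rfl

lemma shrinkIter_succ (h : ℕ → Sym α → Bool) (i : ℕ) (w : List (Sym α)) :
    shrinkIter h (i + 1) w = shrinkStep h (i + 1) (shrinkIter h i w) := rfl

lemma shrinkStep_def (h : ℕ → Sym α → Bool) (i : ℕ) (w : List (Sym α)) :
    shrinkStep h i w = if i % 2 = 1 then rle w else compress (h (i / 2)) w := rfl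

lemma symLevel_base (h : ℕ → Sym α → Bool) (a : α) :
    symLevel h (Sym.base a) = 0 := rfl

lemma symLevel_pow (h : ℕ → Sym α → Bool) (s : Sym α) (k : ℕ) :
    symLevel h (Sym.pow s k) = symLevel h s + 1 := rfl

lemma symLevel_pair (h : ℕ → Sym α → Bool) (s t : Sym α) :
    symLevel h (Sym.pair s t) =
      sInf {l | l % 2 = 0 ∧ max (symLevel h s) (symLevel h t) < l ∧
        h (l / 2) s = false ∧ h (l / 2) t = true} := rfl

/-- `S` occurs in some level-`l` string. -/
def OccL (h : ℕ → Sym α → Bool) (l : ℕ) (S : Sym α) : Prop :=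
  ∃ z : List α, S ∈ shrinkIter h l (embed z)

/-- `S`, `T` occur adjacently (in this order) in some level-`l` string. -/
def AdjL (h : ℕ → Sym α → Bool) (l : ℕ) (S T : Sym α) : Prop :=
  ∃ z : List α, [S, T] <:+: shrinkIter h l (embed z)

/-- The fundamental level invariants of the recompression process. -/
theorem level_inv (h : ℕ → Sym α → Bool) : ∀ l : ℕ,
    (∀ S : Sym α, OccL h l S → symLevel h S ≤ l) ∧
    (∀ Y Z : Sym α, OccL h l (Sym.pair Y Z) → ∃ j, j ≤ l ∧ j % 2 = 0 ∧
        max (symLevel h Y) (symLevel h Z) < j ∧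
        h (j / 2) Y = false ∧ h (j / 2) Z = true) ∧
    (∀ S T : Sym α, AdjL h l S T → ∀ j, j ≤ l → j % 2 = 0 →
        max (symLevel h S) (symLevel h T) < j →
        ¬(h (j / 2) S = false ∧ h (j / 2) T = true)) ∧
    (∀ S : Sym α, AdjL h l S S → l % 2 = 0 ∧ symLevel h S = l) := by
  intro l
  induction l with
  | zero =>
    have hbase : ∀ (z : List α) (S : Sym α), S ∈ shrinkIter h 0 (embed z) →
        ∃ a, S = Sym.base a := by
      intro z S hS
      rw [shrinkIter_zero] at hS
      obtain ⟨a, -, rfl⟩ := List.mem_map.mp hS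
      exact ⟨a, rfl⟩
    refine ⟨?_, ?_, ?_, ?_⟩
    · rintro S ⟨z, hS⟩
      obtain ⟨a, rfl⟩ := hbase z S hS
      exact le_refl 0
    · rintro Y Z ⟨z, hS⟩
      obtain ⟨a, ha⟩ := hbase z _ hS
      exact absurd ha (by simp)
    · rintro S T ⟨z, hadj⟩ j hj hj2 hmax hcond
      exact absurd (lt_of_lt_of_le hmax hj) (Nat.not_lt_zero _)
    · rintro S ⟨z, hadj⟩
      obtain ⟨a, rfl⟩ := hbase z S (hadj.subset (by simp))
      exact ⟨rfl, rfl⟩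
  | succ l IH =>
    obtain ⟨ih1, ih1', ih2, ih3⟩ := IH
    by_cases hpar : (l + 1) % 2 = 1
    · -- odd step: `rle`
      have hstep : ∀ z : List α,
          shrinkIter h (l + 1) (embed z) = rle (shrinkIter h l (embed z)) := by
        intro z
        rw [shrinkIter_succ, shrinkStep_def, if_pos hpar]
      refine ⟨?_, ?_, ?_, ?_⟩
      · rintro S ⟨z, hS⟩
        rw [hstep] at hS
        rcases mem_rle hS with hm | ⟨Y, c, hc, rfl, hadj⟩
        · exact (ih1 S ⟨z, hm⟩).trans (Nat.le_succ l)
        · rw [symLevel_pow, (ih3 Y ⟨z, hadj⟩).2]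
      · rintro Y Z ⟨z, hS⟩
        rw [hstep] at hS
        rcases mem_rle hS with hm | ⟨Y', c, hc, heq, hadj⟩
        · obtain ⟨j, h1, h2, h3, h4, h5⟩ := ih1' Y Z ⟨z, hm⟩
          exact ⟨j, h1.trans (Nat.le_succ l), h2, h3, h4, h5⟩
        · exact absurd heq (by simp)
      · rintro S T ⟨z, hadj⟩ j hj hj2 hmax hcond
        rw [hstep] at hadj
        obtain ⟨Y, c, Y', c', hc, hc', hYY', hXeq, hX'eq, hinf⟩ := adj_rle hadj
        by_cases h2 : 2 ≤ c
        · rw [if_pos h2] at hXeq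
          have hadjY : AdjL h l Y Y :=
            ⟨z, (((pair_prefix_replicate h2).trans
              (List.prefix_append _ _)).isInfix).trans hinf⟩
          have hlev : symLevel h S = l + 1 := by
            rw [hXeq, symLevel_pow, (ih3 Y hadjY).2]
          have := lt_of_le_of_lt (le_max_left (symLevel h S) (symLevel h T)) hmax
          omega
        · by_cases h2' : 2 ≤ c'
          · rw [if_pos h2'] at hX'eq
            have hadjY' : AdjL h l Y' Y' :=
              ⟨z, ((pair_prefix_replicate h2').isInfix.trans
                (List.suffix_append _ _).isInfix).trans hinf⟩
            have hlev : symLevel h T = l + 1 := by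
              rw [hX'eq, symLevel_pow, (ih3 Y' hadjY').2]
            have := lt_of_le_of_lt (le_max_right (symLevel h S) (symLevel h T)) hmax
            omega
          · rw [if_neg h2] at hXeq
            rw [if_neg h2'] at hX'eq
            subst hXeq hX'eq
            have hc1 : c = 1 := by omega
            have hc1' : c' = 1 := by omega
            subst hc1 hc1'
            have hadjl : AdjL h l S T := ⟨z, by simpa using hinf⟩
            have hjl : j ≤ l := by omega
            exact ih2 S T hadjl j hjl hj2 hmax hcond
      · rintro S ⟨z, hadj⟩
        exfalso
        rw [hstep] at hadj
        obtain ⟨Y, c, Y', c', hc, hc', hYY', hXeq, hX'eq, hinf⟩ := adj_rle hadj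
        by_cases h2 : 2 ≤ c <;> by_cases h2' : 2 ≤ c'
        · rw [if_pos h2] at hXeq
          rw [if_pos h2'] at hX'eq
          have := hXeq.symm.trans hX'eq
          injection this with e1 e2
          exact hYY' e1
        · rw [if_pos h2] at hXeq
          rw [if_neg h2'] at hX'eq
          -- S = pow Y c and S = Y' occurs at level l, while [Y,Y] adjacent at level l
          have hoc : OccL h l (Sym.pow Y c) := by
            refine ⟨z, hinf.subset ?_⟩
            rw [← hXeq, hX'eq]
            simp [List.mem_append, List.mem_replicate]
            omega
          have hadjY : AdjL h l Y Y :=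
            ⟨z, (((pair_prefix_replicate h2).trans
              (List.prefix_append _ _)).isInfix).trans hinf⟩
          have h1 := ih1 _ hoc
          rw [symLevel_pow, (ih3 Y hadjY).2] at h1
          omega
        · rw [if_neg h2] at hXeq
          rw [if_pos h2'] at hX'eq
          have hoc : OccL h l (Sym.pow Y' c') := by
            refine ⟨z, hinf.subset ?_⟩
            rw [← hX'eq, hXeq]
            simp [List.mem_append, List.mem_replicate]
            omega
          have hadjY' : AdjL h l Y' Y' :=
            ⟨z, ((pair_prefix_replicate h2').isInfix.trans
              (List.suffix_append _ _).isInfix).trans hinf⟩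
          have h1 := ih1 _ hoc
          rw [symLevel_pow, (ih3 Y' hadjY').2] at h1
          omega
        · rw [if_neg h2] at hXeq
          rw [if_neg h2'] at hX'eq
          exact hYY' (hXeq.symm.trans hX'eq)
    · -- even step: `compress`
      have hpar0 : (l + 1) % 2 = 0 := by omega
      have hlodd : l % 2 = 1 := by omega
      have hstep : ∀ z : List α,
          shrinkIter h (l + 1) (embed z)
            = compress (h ((l + 1) / 2)) (shrinkIter h l (embed z)) := by
        intro z
        rw [shrinkIter_succ, shrinkStep_def, if_neg hpar]
      have hcreated : ∀ (z : List α) (Y Z : Sym α),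
          [Y, Z] <:+: shrinkIter h l (embed z) →
          h ((l + 1) / 2) Y = false → h ((l + 1) / 2) Z = true →
          symLevel h (Sym.pair Y Z) = l + 1 := by
        intro z Y Z hadj hgY hgZ
        have hY : symLevel h Y ≤ l := ih1 Y ⟨z, hadj.subset (by simp)⟩
        have hZ : symLevel h Z ≤ l := ih1 Z ⟨z, hadj.subset (by simp)⟩
        rw [symLevel_pair]
        apply le_antisymm
        · exact Nat.sInf_le ⟨hpar0, by simp; omega, hgY, hgZ⟩
        · refine le_csInf ⟨l + 1, hpar0, by simp; omega, hgY, hgZ⟩ ?_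
          rintro b ⟨hb2, hbmax, hbY, hbZ⟩
          by_contra hlt
          exact ih2 Y Z ⟨z, hadj⟩ b (by omega) hb2 hbmax ⟨hbY, hbZ⟩
      refine ⟨?_, ?_, ?_, ?_⟩
      · rintro S ⟨z, hS⟩
        rw [hstep] at hS
        rcases mem_compress hS with hm | ⟨Y, Z, rfl, hgY, hgZ, hinf⟩
        · exact (ih1 S ⟨z, hm⟩).trans (Nat.le_succ l)
        · exact le_of_eq (hcreated z Y Z hinf hgY hgZ)
      · rintro Y Z ⟨z, hS⟩
        rw [hstep] at hS
        rcases mem_compress hS with hm | ⟨Y', Z', heq, hgY, hgZ, hinf⟩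
        · obtain ⟨j, h1, h2, h3, h4, h5⟩ := ih1' Y Z ⟨z, hm⟩
          exact ⟨j, h1.trans (Nat.le_succ l), h2, h3, h4, h5⟩
        · injection heq with e1 e2
          subst e1 e2
          have hY : symLevel h Y ≤ l := ih1 Y ⟨z, hinf.subset (by simp)⟩
          have hZ : symLevel h Z ≤ l := ih1 Z ⟨z, hinf.subset (by simp)⟩
          exact ⟨l + 1, le_refl _, hpar0, by simp; omega, hgY, hgZ⟩
      · rintro S T ⟨z, hadj⟩ j hj hj2 hmax hcond
        rw [hstep] at hadj
        obtain ⟨p, q, hpC, hqC, hinf, hclause⟩ := adj_compress hadj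
        rcases hpC with rfl | ⟨Y, Z, hSeq, rfl, hgY, hgZ⟩
        · rcases hqC with rfl | ⟨Y', Z', hTeq, rfl, hgY', hgZ'⟩
          · have hadjl : AdjL h l S T := ⟨z, by simpa using hinf⟩
            by_cases hje : j = l + 1
            · subst hje
              exact hclause rfl rfl hcond
            · exact ih2 S T hadjl j (by omega) hj2 hmax hcond
          · have hT : symLevel h T = l + 1 := by
              rw [hTeq]
              exact hcreated z Y' Z' ((List.suffix_append _ _).isInfix.trans hinf) hgY' hgZ'
            have := lt_of_le_of_lt (le_max_right (symLevel h S) (symLevel h T)) hmax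
            omega
        · have hS : symLevel h S = l + 1 := by
            rw [hSeq]
            exact hcreated z Y Z ((List.prefix_append _ _).isInfix.trans hinf) hgY hgZ
          have := lt_of_le_of_lt (le_max_left (symLevel h S) (symLevel h T)) hmax
          omega
      · rintro S ⟨z, hadj⟩
        rw [hstep] at hadj
        obtain ⟨p, q, hpC, hqC, hinf, hclause⟩ := adj_compress hadj
        refine ⟨hpar0, ?_⟩
        rcases hpC with rfl | ⟨Y, Z, rfl, rfl, hgY, hgZ⟩
        · rcases hqC with rfl | ⟨Y', Z', heqS, rfl, hgY', hgZ'⟩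
          · exact absurd (ih3 S ⟨z, by simpa using hinf⟩).1 (by omega)
          · rw [heqS]
            exact hcreated z Y' Z' ((List.suffix_append _ _).isInfix.trans hinf) hgY' hgZ'
        · exact hcreated z Y Z ((List.prefix_append _ _).isInfix.trans hinf) hgY hgZ

/-! #### Corollaries of the level invariants -/

/-- A power symbol `Sᶜ` occurring at level `l` excludes an `SS`-run at level `l`. -/
lemma no_pow_run (h : ℕ → Sym α → Bool) (l : ℕ) {S : Sym α} {c : ℕ}
    (hocc : OccL h l (Sym.pow S c)) (hadj : AdjL h l S S) : False := by
  have h1 := (level_inv h l).1 _ hocc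
  rw [symLevel_pow] at h1
  have h2 := ((level_inv h l).2.2.2 S hadj).2
  omega

/-- A pair symbol `(Y,Z)` occurring at level `l` excludes `YZ` adjacent at level `l`. -/
lemma no_pair_adj (h : ℕ → Sym α → Bool) (l : ℕ) {Y Z : Sym α}
    (hocc : OccL h l (Sym.pair Y Z)) (hadj : AdjL h l Y Z) : False := by
  obtain ⟨j, hj, hj2, hjmax, hjY, hjZ⟩ := (level_inv h l).2.1 Y Z hocc
  exact (level_inv h l).2.2.1 Y Z hadj j hj hj2 hjmax ⟨hjY, hjZ⟩

lemma lcp_cons_same_ne_nil {β : Type} [DecidableEq β] (a : β) (s t : List β) :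
    lcp (a :: s) (a :: t) ≠ [] := by
  rw [lcp_cons, if_pos rfl]
  simp

lemma ne_heads_of_lcp_eq_nil {β : Type} [DecidableEq β] {a b : β} {s t : List β}
    (hh : lcp (a :: s) (b :: t) = []) : a ≠ b := by
  intro e
  subst e
  exact lcp_cons_same_ne_nil a s t hh

lemma lcp_replicate_block {S : Sym α} {c c' : ℕ} {x₂ y₂ : List (Sym α)}
    (hc : 1 ≤ c) (hcc : c < c') (hhd : ∀ b ∈ x₂.head?, b ≠ S) :
    lcp (List.replicate c S ++ x₂) (List.replicate c' S ++ y₂)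
      = List.replicate c S := by
  obtain ⟨d, rfl⟩ := Nat.exists_eq_add_of_lt hcc
  have hce : c + d + 1 = c + (d + 1) := by omega
  rw [hce, List.replicate_add, List.append_assoc, lcp_append]
  rcases x₂ with _ | ⟨e, x₃⟩
  · rw [lcp_nil_left, List.append_nil]
  · have heS : e ≠ S := hhd e rfl
    rw [List.replicate_succ, List.cons_append, lcp_ne_heads _ _ heS, List.append_nil]

end Aux

/-- For `i > 0` and `w, w' ∈ Wᵢ`, let
`A = lca(leaf_{i−1}(w), leaf_{i−1}(w'))` and `B = link(lca(leafᵢ(w), leafᵢ(w')))`.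
Then `B` is an ancestor of `A` and `|RLE(val(B,A))| ≤ 1`. -/
theorem link_lca_ancestor
    {α : Type} [DecidableEq α] (h : ℕ → Sym α → Bool) (W : Finset (List α))
    (i : ℕ) (hi : 0 < i) (w w' : List α) (hw : w ∈ W) (hw' : w' ∈ W)
    (hdw : i ≤ depth h (embed w)) (hdw' : i ≤ depth h (embed w'))
    (A B : List (Sym α))
    (hA : A = lcp (leafNode h (i - 1) w) (leafNode h (i - 1) w'))
    (hB : IsLink h W i (lcp (leafNode h i w) (leafNode h i w')) B) :
    B <+: A ∧ rleLen (A.drop B.length) ≤ 1 := by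
  obtain ⟨k, rfl⟩ : ∃ k, i = k + 1 := ⟨i - 1, by omega⟩
  obtain ⟨-, hBtrie, hBeq⟩ := hB
  obtain ⟨v, hvW, hvd, hBpre⟩ := hBtrie
  rw [show k + 1 - 1 = k from rfl] at hA
  have hBv : B <+: shrinkIter h k (embed v) := hBpre
  have hleaf : ∀ v₀ : List α,
      leafNode h (k + 1) v₀ = shrinkStep h (k + 1) (leafNode h k v₀) := fun _ => rfl
  rw [hleaf w, hleaf w'] at hBeq
  rcases Nat.mod_two_eq_zero_or_one (k + 1) with hpar | hpar
  · -- even step: `compress`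
    have hstep : ∀ x : List (Sym α),
        shrinkStep h (k + 1) x = compress (h ((k + 1) / 2)) x := fun x => by
      rw [shrinkStep_def, if_neg (by omega)]
    set g := h ((k + 1) / 2) with hg
    simp only [hstep] at hBeq
    have mkH : ∀ t : List α, ∀ Y Z : Sym α, g Y = false → g Z = true →
        ¬(Sym.pair Y Z ∈ B ∧ [Y, Z] <:+: leafNode h k t) ∧
        ¬(Sym.pair Y Z ∈ leafNode h k t ∧ [Y, Z] <:+: B) := by
      intro t Y Z _ _
      constructor
      · rintro ⟨hm, hi⟩
        exact no_pair_adj h k ⟨v, hBv.subset hm⟩ ⟨t, hi⟩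
      · rintro ⟨hm, hi⟩
        exact no_pair_adj h k ⟨t, hm⟩ ⟨v, hi.trans hBv.isInfix⟩
    have hp1 : compress g B <+: compress g (leafNode h k w) := by
      rw [← hBeq]; exact lcp_prefix_left _ _
    have hp2 : compress g B <+: compress g (leafNode h k w') := by
      rw [← hBeq]; exact lcp_prefix_right _ _
    obtain ⟨hBu, hsplit1⟩ := compress_prefix_lift (mkH w) hp1
    obtain ⟨hBu', hsplit2⟩ := compress_prefix_lift (mkH w') hp2
    obtain ⟨ru, hru⟩ := hBu
    obtain ⟨ru', hru'⟩ := hBu'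
    have hAeq : A = B ++ lcp ru ru' := by rw [hA, ← hru, ← hru', lcp_append]
    have hdropu : List.drop B.length (leafNode h k w) = ru := by
      rw [← hru, List.drop_left]
    have hdropu' : List.drop B.length (leafNode h k w') = ru' := by
      rw [← hru', List.drop_left]
    rw [hdropu] at hsplit1
    rw [hdropu'] at hsplit2
    have hnil : lcp (compress g ru) (compress g ru') = [] := by
      have he : compress g B ++ lcp (compress g ru) (compress g ru')
          = compress g B ++ [] := by
        rw [List.append_nil, ← lcp_append, ← hsplit1, ← hsplit2, hBeq]
      exact List.append_cancel_left he
    refine ⟨by rw [hAeq]; exact List.prefix_append _ _, ?_⟩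
    rw [hAeq, List.drop_left]
    rcases ru with _ | ⟨a, m⟩
    · rw [lcp_nil_left]; simp [rleLen_nil]
    rcases ru' with _ | ⟨a', m'⟩
    · rw [lcp_nil_right]; simp [rleLen_nil]
    by_cases haa : a = a'
    · subst haa
      rw [lcp_cons, if_pos rfl]
      suffices hmm : lcp m m' = [] by
        rw [hmm]
        have := rleLen_replicate_le_one a 1
        simpa using this
      rcases m with _ | ⟨b, m₂⟩
      · rw [lcp_nil_left]
      rcases m' with _ | ⟨b', m₂'⟩
      · rw [lcp_nil_right]
      by_cases hbb : b = b'
      · exfalso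
        subst hbb
        by_cases hcond : g a = false ∧ g b = true
        · rw [compress_cons₂, if_pos hcond, compress_cons₂, if_pos hcond] at hnil
          exact lcp_cons_same_ne_nil _ _ _ hnil
        · rw [compress_cons₂, if_neg hcond, compress_cons₂, if_neg hcond] at hnil
          exact lcp_cons_same_ne_nil _ _ _ hnil
      · rw [lcp_ne_heads _ _ hbb]
    · rw [lcp_ne_heads _ _ haa]
      simp [rleLen_nil]
  · -- odd step: `rle`
    have hstep : ∀ x : List (Sym α), shrinkStep h (k + 1) x = rle x := fun x => by
      rw [shrinkStep_def, if_pos hpar]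
    simp only [hstep] at hBeq
    have mkH : ∀ t : List α, ∀ (S : Sym α) (c : ℕ), 2 ≤ c →
        ¬(Sym.pow S c ∈ B ∧ [S, S] <:+: leafNode h k t) ∧
        ¬(Sym.pow S c ∈ leafNode h k t ∧ [S, S] <:+: B) := by
      intro t S c _
      constructor
      · rintro ⟨hm, hi⟩
        exact no_pow_run h k ⟨v, hBv.subset hm⟩ ⟨t, hi⟩
      · rintro ⟨hm, hi⟩
        exact no_pow_run h k ⟨t, hm⟩ ⟨v, hi.trans hBv.isInfix⟩
    have hp1 : rle B <+: rle (leafNode h k w) := by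
      rw [← hBeq]; exact lcp_prefix_left _ _
    have hp2 : rle B <+: rle (leafNode h k w') := by
      rw [← hBeq]; exact lcp_prefix_right _ _
    obtain ⟨hBu, hsplit1⟩ := rle_prefix_lift (mkH w) hp1
    obtain ⟨hBu', hsplit2⟩ := rle_prefix_lift (mkH w') hp2
    obtain ⟨ru, hru⟩ := hBu
    obtain ⟨ru', hru'⟩ := hBu'
    have hAeq : A = B ++ lcp ru ru' := by rw [hA, ← hru, ← hru', lcp_append]
    have hdropu : List.drop B.length (leafNode h k w) = ru := by
      rw [← hru, List.drop_left]
    have hdropu' : List.drop B.length (leafNode h k w') = ru' := by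
      rw [← hru', List.drop_left]
    rw [hdropu] at hsplit1
    rw [hdropu'] at hsplit2
    have hnil : lcp (rle ru) (rle ru') = [] := by
      have he : rle B ++ lcp (rle ru) (rle ru') = rle B ++ [] := by
        rw [List.append_nil, ← lcp_append, ← hsplit1, ← hsplit2, hBeq]
      exact List.append_cancel_left he
    refine ⟨by rw [hAeq]; exact List.prefix_append _ _, ?_⟩
    rw [hAeq, List.drop_left]
    rcases hr1 : runs ru with _ | ⟨⟨S, c⟩, rx⟩
    · rw [runs_eq_nil_iff.mp hr1, lcp_nil_left]; simp [rleLen_nil]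
    rcases hr2 : runs ru' with _ | ⟨⟨S', c'⟩, rx'⟩
    · rw [runs_eq_nil_iff.mp hr2, lcp_nil_right]; simp [rleLen_nil]
    obtain ⟨hc, x₂, hx₂, hrx₂, hhd⟩ := runs_inv hr1
    obtain ⟨hc', y₂, hy₂, hry₂, hhd'⟩ := runs_inv hr2
    have hrle1 : rle ru = (if 2 ≤ c then Sym.pow S c else S) :: rle x₂ := by
      rw [rle_runs, hr1, List.map_cons, rle_runs, hrx₂]
    have hrle2 : rle ru' = (if 2 ≤ c' then Sym.pow S' c' else S') :: rle y₂ := by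
      rw [rle_runs, hr2, List.map_cons, rle_runs, hry₂]
    rw [hrle1, hrle2] at hnil
    have hne := ne_heads_of_lcp_eq_nil hnil
    by_cases hSS : S = S'
    · subst hSS
      have hcc : c ≠ c' := by rintro rfl; exact hne rfl
      rcases Nat.lt_or_ge c c' with hlt | hge
      · rw [hx₂, hy₂, lcp_replicate_block hc hlt hhd]
        exact rleLen_replicate_le_one _ _
      · have hlt' : c' < c := by omega
        rw [hx₂, hy₂, lcp_comm, lcp_replicate_block hc' hlt' hhd']
        exact rleLen_replicate_le_one _ _
    · obtain ⟨t1, ht1⟩ := runs_head_eq_cons hr1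
      obtain ⟨t2, ht2⟩ := runs_head_eq_cons hr2
      rw [ht1, ht2, lcp_ne_heads _ _ hSS]
      simp [rleLen_nil]

end DynStr
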